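/- Let G be the graph obtained by taking a triangle K₃ with vertices u₁, u₂, v₁ and joining v₁ to a complete bipartite graph K_{k,k} by a path v₁, v₂, ..., v_{n−2k−1} whose endpoint v_{n−2k−1} lies in K_{k,k} (with k ≥ 3). If x is a unit Perron eigenvector of G with eigenvalue μ = μ(G), then the entries x_{u₁} = x_{u₂} satisfy x_{u₁} = x_{v₁}/(μ−1), and x_{v_i} < (μ−1)·x_{v_{i+1}} for all 1 ≤ i ≤ n−2k−2. -/

import Mathlib

open Classical in
noncomputable def adjMat {V : Type*} [Fintype V] (G : SimpleGraph V) :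
    Matrix V V ℝ :=
  Matrix.of fun i j => if G.Adj i j then 1 else 0

def IsAdjEigenvalue {V : Type*} [Fintype V] (A : Matrix V V ℝ) (μ : ℝ) : Prop :=
  ∃ x : V → ℝ, x ≠ 0 ∧ A.mulVec x = μ • x

def IsMaxAdjEigenvalue {V : Type*} [Fintype V] (A : Matrix V V ℝ) (μ : ℝ) : Prop :=
  IsAdjEigenvalue A μ ∧ ∀ ν, IsAdjEigenvalue A ν → ν ≤ μ

def IsMinAdjEigenvalue {V : Type*} [Fintype V] (A : Matrix V V ℝ) (μ : ℝ) : Prop :=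
  IsAdjEigenvalue A μ ∧ ∀ ν, IsAdjEigenvalue A ν → μ ≤ ν

/-- Auxiliary edge relation (on indices) for the graph made of a triangle on indices
`0, 1, 2` (with `v₁` at index `2`), a path `v₁, …, v_p` (`p = n - 2k - 1`, `v_i` at
index `i + 1`), and a complete bipartite graph `K_{k,k}` with parts
`{n - 2k} ∪ [n - 2k + 1, n - k - 1]` (the part containing `v_p`, which sits at index
`n - 2k`) and `[n - k, n - 1]`. -/
def triPathRel (n k : ℕ) (x y : ℕ) : Prop :=
  (x < 3 ∧ y < 3)
  ∨ (2 ≤ x ∧ x ≤ n - 2 * k - 1 ∧ y = x + 1)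
  ∨ ((x = n - 2 * k ∨ (n - 2 * k + 1 ≤ x ∧ x ≤ n - k - 1)) ∧ n - k ≤ y)

/-- The graph `G` of order `n`: a triangle `u₁ u₂ v₁` joined to `K_{k,k}`
by the path `v₁, …, v_{n-2k-1}` whose last vertex lies in `K_{k,k}`. -/
def triPathKkk (n k : ℕ) : SimpleGraph (Fin n) where
  Adj a b := a ≠ b ∧ (triPathRel n k a.1 b.1 ∨ triPathRel n k b.1 a.1)
  symm := by
    constructor
    intro a b h
    exact ⟨h.1.symm, h.2.symm⟩
  loopless := by
    constructor
    intro a h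
    exact h.1 rfl

/-! The two triangle vertices `u₁, u₂` have the same neighbourhood apart from each
other, which forces `x_{u₁} = x_{u₂}` and then `(μ - 1) x_{u₁} = x_{v₁}`. The subgraph `K_{k,k}`
gives `μ ≥ k ≥ 3`. Along the path, `μ x_{v_i} = x_{v_{i-1}} + x_{v_{i+1}}`, so the inequality
propagates from `v_i` to `v_{i+1}` as soon as `μ ≥ 2`; at `v₁` it amounts to `μ² - μ - 3 > 0`. -/

open Classical Finset

section Eigenvector

variable {V : Type*} [Fintype V] {G : SimpleGraph V} {μ : ℝ} {x : V → ℝ}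

theorem adjMat_eq_adjMatrix (G : SimpleGraph V) : adjMat G = G.adjMatrix ℝ := rfl

theorem mul_apply_eq_sum_neighborFinset (heig : (adjMat G).mulVec x = μ • x) (v : V) :
    μ * x v = ∑ w ∈ G.neighborFinset v, x w := by
  rw [← G.adjMatrix_mulVec_apply, ← adjMat_eq_adjMatrix, heig, Pi.smul_apply, smul_eq_mul]

theorem mul_apply_eq_sum_of_adj_iff (heig : (adjMat G).mulVec x = μ • x) {v : V}
    {s : Finset V} (hs : ∀ w, G.Adj v w ↔ w ∈ s) : μ * x v = ∑ w ∈ s, x w := by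
  rw [mul_apply_eq_sum_neighborFinset heig v]
  congr 1
  ext w
  rw [SimpleGraph.mem_neighborFinset, hs]

theorem eigenvalue_nonneg_of_pos (heig : (adjMat G).mulVec x = μ • x) (hx : ∀ v, 0 < x v)
    (v : V) : 0 ≤ μ := by
  have h := mul_apply_eq_sum_neighborFinset heig v
  exact nonneg_of_mul_nonneg_left (h ▸ sum_nonneg fun w _ => (hx w).le) (hx v)

theorem sum_le_mul_apply_of_forall_adj (heig : (adjMat G).mulVec x = μ • x)
    (hx : ∀ v, 0 ≤ x v) {v : V} {s : Finset V} (hs : ∀ w ∈ s, G.Adj v w) :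
    ∑ w ∈ s, x w ≤ μ * x v := by
  rw [mul_apply_eq_sum_neighborFinset heig v]
  exact sum_le_sum_of_subset_of_nonneg (fun w hw => (G.mem_neighborFinset v w).2 (hs w hw))
    (fun w _ _ => hx w)

theorem card_mul_card_le_sq_of_forall_adj (heig : (adjMat G).mulVec x = μ • x)
    (hx : ∀ v, 0 < x v) {S T : Finset V} (hS : S.Nonempty) (hT : T.Nonempty)
    (hST : ∀ s ∈ S, ∀ t ∈ T, G.Adj s t) : (#S * #T : ℝ) ≤ μ ^ 2 := by
  obtain ⟨s₀, hs₀, hs₀min⟩ := S.exists_min_image x hS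
  obtain ⟨t₀, ht₀, ht₀min⟩ := T.exists_min_image x hT
  have hT_le : #T * x t₀ ≤ μ * x s₀ := calc
    #T * x t₀ ≤ ∑ t ∈ T, x t := by simpa using card_nsmul_le_sum T x (x t₀) ht₀min
    _ ≤ μ * x s₀ := sum_le_mul_apply_of_forall_adj heig (fun v => (hx v).le) (hST s₀ hs₀)
  have hS_le : #S * x s₀ ≤ μ * x t₀ := calc
    #S * x s₀ ≤ ∑ s ∈ S, x s := by simpa using card_nsmul_le_sum S x (x s₀) hs₀min
    _ ≤ μ * x t₀ := sum_le_mul_apply_of_forall_adj heig (fun v => (hx v).le)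
        (fun s hs => (hST s hs t₀ ht₀).symm)
  have hprod := mul_le_mul hS_le hT_le (mul_nonneg (by positivity) (hx t₀).le)
    (by nlinarith [hx s₀, hx t₀])
  have hpos : 0 < x s₀ * x t₀ := mul_pos (hx s₀) (hx t₀)
  nlinarith

end Eigenvector

theorem lt_sub_one_mul_of_eq_add {μ a b c : ℝ} (hμ : 2 ≤ μ) (hb : 0 < b) (hab : a < (μ - 1) * b)
    (hrec : μ * b = a + c) : b < (μ - 1) * c := by
  nlinarith

section TriPathKkk

variable {n k : ℕ}

@[simp]
theorem triPathKkk_adj_mk {a b : ℕ} (ha : a < n) (hb : b < n) :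
    (triPathKkk n k).Adj ⟨a, ha⟩ ⟨b, hb⟩ ↔
      a ≠ b ∧ (triPathRel n k a b ∨ triPathRel n k b a) := by
  simp [triPathKkk]

def triPathKkkPartA (n k : ℕ) : Finset (Fin n) :=
  (Ico (n - 2 * k) (n - k)).attachFin fun _ hm => by simp at hm; omega

def triPathKkkPartB (n k : ℕ) : Finset (Fin n) :=
  (Ico (n - k) n).attachFin fun _ hm => by simp at hm; omega

theorem card_triPathKkkPartA (hn : 2 * k ≤ n) : #(triPathKkkPartA n k) = k := by
  simp only [triPathKkkPartA, card_attachFin, Nat.card_Ico]; omega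

theorem card_triPathKkkPartB (hn : k ≤ n) : #(triPathKkkPartB n k) = k := by
  simp only [triPathKkkPartB, card_attachFin, Nat.card_Ico]; omega

theorem triPathKkk_adj_of_mem_parts {a b : Fin n} (ha : a ∈ triPathKkkPartA n k)
    (hb : b ∈ triPathKkkPartB n k) : (triPathKkk n k).Adj a b := by
  obtain ⟨a, ha'⟩ := a
  obtain ⟨b, hb'⟩ := b
  simp only [triPathKkkPartA, triPathKkkPartB, mem_attachFin, mem_Ico] at ha hb
  simp only [triPathKkk_adj_mk, triPathRel]
  omega

variable {μ : ℝ} {x : Fin n → ℝ}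

theorem triPathKkk_le_eigenvalue (hk : 1 ≤ k) (hn : 2 * k ≤ n) (hx : ∀ i, 0 < x i)
    (heig : (adjMat (triPathKkk n k)).mulVec x = μ • x) : (k : ℝ) ≤ μ := by
  have hcard := card_mul_card_le_sq_of_forall_adj heig hx
    (S := triPathKkkPartA n k) (T := triPathKkkPartB n k)
    (card_pos.1 (by rw [card_triPathKkkPartA hn]; omega))
    (card_pos.1 (by rw [card_triPathKkkPartB (by omega)]; omega))
    (fun _ ha _ hb => triPathKkk_adj_of_mem_parts ha hb)
  rw [card_triPathKkkPartA hn, card_triPathKkkPartB (by omega)] at hcard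
  nlinarith [eigenvalue_nonneg_of_pos heig hx ⟨0, by omega⟩]

theorem triPathKkk_eigenvector_triangle (hk : 1 ≤ k) (hn : 2 * k + 2 ≤ n)
    (hx : ∀ i, 0 < x i) (heig : (adjMat (triPathKkk n k)).mulVec x = μ • x) :
    x ⟨0, by omega⟩ = x ⟨1, by omega⟩ ∧ (μ - 1) * x ⟨0, by omega⟩ = x ⟨2, by omega⟩ := by
  have h₀ : μ * x ⟨0, by omega⟩ = x ⟨1, by omega⟩ + x ⟨2, by omega⟩ := by
    rw [mul_apply_eq_sum_of_adj_iff heig (s := {⟨1, by omega⟩, ⟨2, by omega⟩}), sum_pair (by simp)]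
    rintro ⟨j, hj⟩
    simp only [triPathKkk_adj_mk, triPathRel, mem_insert, mem_singleton, Fin.mk.injEq]
    omega
  have h₁ : μ * x ⟨1, by omega⟩ = x ⟨0, by omega⟩ + x ⟨2, by omega⟩ := by
    rw [mul_apply_eq_sum_of_adj_iff heig (s := {⟨0, by omega⟩, ⟨2, by omega⟩}), sum_pair (by simp)]
    rintro ⟨j, hj⟩
    simp only [triPathKkk_adj_mk, triPathRel, mem_insert, mem_singleton, Fin.mk.injEq]
    omega
  have hμ : 0 ≤ μ := eigenvalue_nonneg_of_pos heig hx ⟨0, by omega⟩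
  have h₀₁ : x ⟨0, by omega⟩ = x ⟨1, by omega⟩ := by
    have h : (μ + 1) * (x ⟨0, by omega⟩ - x ⟨1, by omega⟩) = 0 := by linear_combination h₀ - h₁
    linarith [(mul_eq_zero.1 h).resolve_left (by linarith)]
  exact ⟨h₀₁, by linarith⟩

theorem triPathKkk_eigenvector_path_start (hk : 3 ≤ k) (hn : 2 * k + 3 ≤ n)
    (hx : ∀ i, 0 < x i) (heig : (adjMat (triPathKkk n k)).mulVec x = μ • x) :
    x ⟨2, by omega⟩ < (μ - 1) * x ⟨3, by omega⟩ := by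
  obtain ⟨h₀₁, h₀₂⟩ := triPathKkk_eigenvector_triangle (by omega) (by omega) hx heig
  have h₂ : μ * x ⟨2, by omega⟩ = x ⟨0, by omega⟩ + x ⟨1, by omega⟩ + x ⟨3, by omega⟩ := by
    rw [mul_apply_eq_sum_of_adj_iff heig (s := {⟨0, by omega⟩, ⟨1, by omega⟩, ⟨3, by omega⟩}),
      sum_insert (by simp), sum_pair (by simp), add_assoc]
    rintro ⟨j, hj⟩
    simp only [triPathKkk_adj_mk, triPathRel, mem_insert, mem_singleton, Fin.mk.injEq]
    omega
  have hμ : (3 : ℝ) ≤ μ := le_trans (by exact_mod_cast hk) (triPathKkk_le_eigenvalue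
    (by omega) (by omega) hx heig)
  -- eliminating `x₀ = x₁ = x₂ / (μ - 1)` turns the claim into `(μ² - μ - 3) x₂ > 0`
  have hquad : 0 < (μ ^ 2 - μ - 3) * x ⟨2, by omega⟩ := mul_pos (by nlinarith) (hx _)
  nlinarith [hx ⟨0, by omega⟩]

theorem triPathKkk_eigenvector_path_step (hk : 2 ≤ k) (hn : 2 * k ≤ n) {i : ℕ} (hi₁ : 1 ≤ i)
    (hi₂ : i + 3 ≤ n - 2 * k) (hx : ∀ i, 0 < x i)
    (heig : (adjMat (triPathKkk n k)).mulVec x = μ • x)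
    (hlt : x ⟨i + 1, by omega⟩ < (μ - 1) * x ⟨i + 2, by omega⟩) :
    x ⟨i + 2, by omega⟩ < (μ - 1) * x ⟨i + 3, by omega⟩ := by
  have hrec : μ * x ⟨i + 2, by omega⟩ = x ⟨i + 1, by omega⟩ + x ⟨i + 3, by omega⟩ := by
    rw [mul_apply_eq_sum_of_adj_iff heig (s := {⟨i + 1, by omega⟩, ⟨i + 3, by omega⟩}),
      sum_pair (by simp)]
    rintro ⟨j, hj⟩
    simp only [triPathKkk_adj_mk, triPathRel, mem_insert, mem_singleton, Fin.mk.injEq]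
    omega
  have hμ : (2 : ℝ) ≤ μ := le_trans (by exact_mod_cast hk) (triPathKkk_le_eigenvalue
    (by omega) hn hx heig)
  exact lt_sub_one_mul_of_eq_add hμ (hx _) hlt hrec

end TriPathKkk

theorem stmt14 (n k : ℕ) (hk : 3 ≤ k) (hn : 2 * k + 2 ≤ n)
    (μ : ℝ) (x : Fin n → ℝ) (hxpos : ∀ i, 0 < x i)
    (heig : (adjMat (triPathKkk n k)).mulVec x = μ • x) :
    x ⟨0, by omega⟩ = x ⟨1, by omega⟩ ∧
    x ⟨0, by omega⟩ = x ⟨2, by omega⟩ / (μ - 1) ∧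
    ∀ (i : ℕ) (_hi1 : 1 ≤ i) (_hi2 : i ≤ n - 2 * k - 2),
      x ⟨i + 1, by omega⟩ < (μ - 1) * x ⟨i + 2, by omega⟩ := by
  obtain ⟨h₀₁, h₀₂⟩ := triPathKkk_eigenvector_triangle (by omega) hn hxpos heig
  have hμ : (3 : ℝ) ≤ μ := le_trans (by exact_mod_cast hk) (triPathKkk_le_eigenvalue
    (by omega) (by omega) hxpos heig)
  refine ⟨h₀₁, by rw [eq_div_iff (by linarith), mul_comm, h₀₂], fun i hi₁ => ?_⟩
  induction i, hi₁ using Nat.le_induction with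
  | base => exact fun _ => triPathKkk_eigenvector_path_start hk (by omega) hxpos heig
  | succ i hi ih =>
    exact fun hi₂ => triPathKkk_eigenvector_path_step (by omega) (by omega) hi (by omega)
      hxpos heig (ih (by omega))
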